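/- Let r > 0 and σ ∈ ℝ. Set λ₀ := −σ and, for n ∈ ℤ∖{0}, λ_n := sgn(n)√(σ² + 2|n| r²). Define g₀(y) := r^{−1/2} (0, 𝔥₀(r y)) and, for n ∈ ℤ∖{0}, α_n := (2r)^{−1/2} √(1 + σ/λ_n) and g_n(y) := α_n ( 𝔥_{|n|−1}(r y), (√(2|n|) r/(λ_n + σ)) 𝔥_{|n|}(r y) ). Then for every n ∈ ℤ and every y ∈ ℝ: (T_{r,σ} g_n)(y) = λ_n g_n(y); that is, each g_n is an eigenfunction of the operator T_{r,σ} with eigenvalue λ_n. -/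

import Mathlib

noncomputable section

/-- The k-th physicists' Hermite polynomial, `H_k(y) = (−1)^k e^{y²} (d/dy)^k e^{−y²}`. -/
def physHermite (k : ℕ) (y : ℝ) : ℝ :=
  (-1 : ℝ) ^ k * Real.exp (y ^ 2) * iteratedDeriv k (fun t => Real.exp (-t ^ 2)) y

/-- The k-th Hermite function `𝔥_k(y) = (2^k k! √π)^{−1/2} H_k(y) e^{−y²/2}`. -/
def hermiteFun (k : ℕ) (y : ℝ) : ℝ :=
  (Real.sqrt (2 ^ k * (Nat.factorial k : ℝ) * Real.sqrt Real.pi))⁻¹ *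
    physHermite k y * Real.exp (-(y ^ 2) / 2)

/-- The eigenvalues `λ_n`: `λ₀ = −σ`, `λ_n = sgn(n)√(σ² + 2|n|r²)` for `n ≠ 0`. -/
def lamE (r σ : ℝ) (n : ℤ) : ℝ :=
  if n = 0 then -σ else ((Int.sign n : ℤ) : ℝ) * Real.sqrt (σ ^ 2 + 2 * |(n : ℝ)| * r ^ 2)

/-- The normalization constants `α_n = (2r)^{−1/2}√(1 + σ/λ_n)` for `n ≠ 0`. -/
def alphaE (r σ : ℝ) (n : ℤ) : ℝ :=
  (Real.sqrt (2 * r))⁻¹ * Real.sqrt (1 + σ / lamE r σ n)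

/-- The eigenfunctions `g_n : ℝ → ℂ²`. -/
def gE (r σ : ℝ) (n : ℤ) (y : ℝ) : ℂ × ℂ :=
  if n = 0 then
    (0, (((Real.sqrt r)⁻¹ * hermiteFun 0 (r * y) : ℝ) : ℂ))
  else
    (((alphaE r σ n * hermiteFun (n.natAbs - 1) (r * y) : ℝ) : ℂ),
     ((alphaE r σ n * (Real.sqrt (2 * |(n : ℝ)|) * r / (lamE r σ n + σ)) *
        hermiteFun n.natAbs (r * y) : ℝ) : ℂ))

/-- The operator `T_{r,σ} = !![σ, y r² + i D_y; y r² − i D_y, −σ]` acting on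
differentiable `w : ℝ → ℂ²`. -/
def TOp (r σ : ℝ) (w : ℝ → ℂ × ℂ) (y : ℝ) : ℂ × ℂ :=
  ((σ : ℂ) * (w y).1 + ((y * r ^ 2 : ℝ) : ℂ) * (w y).2 + deriv (fun t => (w t).2) y,
   ((y * r ^ 2 : ℝ) : ℂ) * (w y).1 - deriv (fun t => (w t).1) y - (σ : ℂ) * (w y).2)


/-!
The Hermite functions satisfy the ladder relations `(y - d/dy) 𝔥_k = √(2(k+1)) 𝔥_{k+1}` and
`(y + d/dy) 𝔥_{k+1} = √(2(k+1)) 𝔥_k`, which come from `H_{k+1} = 2y H_k - H_k'` and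
`H_{k+1}' = 2(k+1) H_k`. After substituting `x = r y`, the off-diagonal entries of `T_{r,σ}` are
`r` times these ladder operators, so `T_{r,σ}` sends `(𝔥_m, β 𝔥_{m+1})` to
`((σ + r β √(2(m+1))) 𝔥_m, (r √(2(m+1)) - σ β) 𝔥_{m+1})`, which is `λ (𝔥_m, β 𝔥_{m+1})` as
soon as `β (λ + σ) = r √(2(m+1))` and `λ² = σ² + 2(m+1) r²`. For `n = 0` the lowering operator
kills `𝔥₀` and only the entry `-σ` survives.
-/

open Polynomial

def physHermitePoly : ℕ → ℝ[X]
  | 0 => 1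
  | k + 1 => 2 * X * physHermitePoly k - derivative (physHermitePoly k)

lemma derivative_physHermitePoly_succ (k : ℕ) :
    derivative (physHermitePoly (k + 1)) = 2 * (k + 1 : ℝ[X]) * physHermitePoly k := by
  induction k with
  | zero => simp [physHermitePoly]
  | succ k ih =>
    rw [physHermitePoly, derivative_sub, derivative_mul, ih]
    simp only [physHermitePoly, derivative_mul, derivative_ofNat, derivative_X, derivative_add,
      derivative_natCast, derivative_one, Nat.cast_succ]
    ring

lemma iteratedDeriv_exp_neg_sq (k : ℕ) (y : ℝ) :
    iteratedDeriv k (fun t => Real.exp (-t ^ 2)) y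
      = (-1) ^ k * (physHermitePoly k).eval y * Real.exp (-y ^ 2) := by
  induction k generalizing y with
  | zero => simp [physHermitePoly]
  | succ k ih =>
    have hgauss :
        HasDerivAt (fun t : ℝ => Real.exp (-t ^ 2)) (Real.exp (-y ^ 2) * -(2 * y)) y := by
      simpa using (hasDerivAt_pow 2 y).fun_neg.exp
    have hderiv :
        HasDerivAt (fun t => (-1) ^ k * ((physHermitePoly k).eval t * Real.exp (-t ^ 2)))
        ((-1) ^ k * ((derivative (physHermitePoly k)).eval y * Real.exp (-y ^ 2)
          + (physHermitePoly k).eval y * (Real.exp (-y ^ 2) * -(2 * y)))) y :=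
      (((physHermitePoly k).hasDerivAt y).mul hgauss).const_mul _
    rw [iteratedDeriv_succ, funext ih]
    simp only [mul_assoc]
    rw [hderiv.deriv, physHermitePoly]
    simp only [eval_sub, eval_mul, eval_ofNat, eval_X]
    ring

lemma physHermite_eq_eval (k : ℕ) (y : ℝ) : physHermite k y = (physHermitePoly k).eval y := by
  rw [physHermite, iteratedDeriv_exp_neg_sq]
  calc (-1) ^ k * Real.exp (y ^ 2) * ((-1) ^ k * (physHermitePoly k).eval y * Real.exp (-y ^ 2))
      = ((-1) ^ k) ^ 2 * (Real.exp (y ^ 2) * Real.exp (-y ^ 2)) * (physHermitePoly k).eval y := by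
        ring
    _ = (physHermitePoly k).eval y := by rw [← pow_mul', ← Real.exp_add]; simp

def hermiteNormConst (k : ℕ) : ℝ := (√(2 ^ k * (Nat.factorial k : ℝ) * √Real.pi))⁻¹

lemma hermiteNormConst_eq (k : ℕ) :
    hermiteNormConst k = √(2 * (k + 1)) * hermiteNormConst (k + 1) := by
  have hsplit : (2 : ℝ) ^ (k + 1) * (Nat.factorial (k + 1) : ℝ) * √Real.pi
      = 2 * (k + 1) * (2 ^ k * (Nat.factorial k : ℝ) * √Real.pi) := by
    push_cast [Nat.factorial_succ]; ring
  have htwo : (0 : ℝ) < 2 * (k + 1) := by positivity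
  have hsqrt : 0 < √(2 * ((k : ℝ) + 1)) := Real.sqrt_pos.mpr htwo
  rw [hermiteNormConst, hermiteNormConst, hsplit, Real.sqrt_mul htwo.le, mul_inv,
    mul_inv_cancel_left₀ hsqrt.ne']

lemma hermiteFun_eq (k : ℕ) (y : ℝ) :
    hermiteFun k y
      = hermiteNormConst k * (physHermitePoly k).eval y * Real.exp (-(y ^ 2) / 2) := by
  rw [hermiteFun, physHermite_eq_eval, hermiteNormConst]

lemma hasDerivAt_hermiteFun (k : ℕ) (y : ℝ) :
    HasDerivAt (hermiteFun k) (hermiteNormConst k *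
      ((derivative (physHermitePoly k)).eval y - y * (physHermitePoly k).eval y) *
        Real.exp (-(y ^ 2) / 2)) y := by
  have hexponent : HasDerivAt (fun t : ℝ => -(t ^ 2) / 2) (-y) y :=
    (hasDerivAt_pow 2 y).fun_neg.div_const 2 |>.congr_deriv (by norm_num; ring)
  have hprod := (((physHermitePoly k).hasDerivAt y).mul hexponent.exp).const_mul
    (hermiteNormConst k)
  rw [funext (hermiteFun_eq k)]
  simp only [mul_assoc] at hprod ⊢
  exact hprod.congr_deriv (by ring)

lemma deriv_hermiteFun_zero (y : ℝ) : deriv (hermiteFun 0) y = -y * hermiteFun 0 y := by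
  rw [(hasDerivAt_hermiteFun 0 y).deriv, hermiteFun_eq, physHermitePoly]
  simp only [derivative_one, eval_zero, eval_one]
  ring

lemma sub_deriv_hermiteFun (k : ℕ) (y : ℝ) :
    y * hermiteFun k y - deriv (hermiteFun k) y = √(2 * (k + 1)) * hermiteFun (k + 1) y := by
  rw [(hasDerivAt_hermiteFun k y).deriv, hermiteFun_eq, hermiteFun_eq, hermiteNormConst_eq k,
    physHermitePoly]
  simp only [eval_sub, eval_mul, eval_ofNat, eval_X]
  ring

lemma add_deriv_hermiteFun_succ (k : ℕ) (y : ℝ) :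
    y * hermiteFun (k + 1) y + deriv (hermiteFun (k + 1)) y
      = √(2 * (k + 1)) * hermiteFun k y := by
  have hsq : √(2 * ((k : ℝ) + 1)) * √(2 * (k + 1)) = 2 * (k + 1) :=
    Real.mul_self_sqrt (by positivity)
  rw [(hasDerivAt_hermiteFun (k + 1) y).deriv, derivative_physHermitePoly_succ, hermiteFun_eq,
    hermiteFun_eq, hermiteNormConst_eq k]
  simp only [eval_mul, eval_ofNat, eval_add, eval_natCast, eval_one]
  linear_combination
    -hermiteNormConst (k + 1) * (physHermitePoly k).eval y * Real.exp (-(y ^ 2) / 2) * hsq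

lemma hasDerivAt_hermiteFun_comp_mul (k : ℕ) (r y : ℝ) :
    HasDerivAt (fun t => hermiteFun k (r * t)) (r * deriv (hermiteFun k) (r * y)) y := by
  have hlin : HasDerivAt (fun t : ℝ => r * t) r y := by
    simpa using (hasDerivAt_id y).const_mul r
  rw [mul_comm]
  exact (hasDerivAt_hermiteFun k (r * y)).differentiableAt.hasDerivAt.comp y hlin

lemma TOp_ofReal_eq_smul {f g : ℝ → ℝ} {f' g' r σ L y : ℝ} (hf : HasDerivAt f f' y)
    (hg : HasDerivAt g g' y) (h₁ : σ * f y + y * r ^ 2 * g y + g' = L * f y)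
    (h₂ : y * r ^ 2 * f y - f' - σ * g y = L * g y) :
    TOp r σ (fun t => ((f t : ℂ), (g t : ℂ))) y = (L : ℂ) • ((f y : ℂ), (g y : ℂ)) := by
  rw [TOp, hf.ofReal_comp.deriv, hg.ofReal_comp.deriv, Prod.smul_mk, smul_eq_mul, smul_eq_mul]
  refine Prod.ext ?_ ?_
  · dsimp only
    exact_mod_cast h₁
  · dsimp only
    exact_mod_cast h₂

lemma TOp_hermiteFun_pair {r σ L β : ℝ} (α : ℝ) (m : ℕ)
    (hL : L ^ 2 = σ ^ 2 + 2 * (m + 1) * r ^ 2) (hLσ : L + σ ≠ 0)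
    (hβ : β * (L + σ) = √(2 * (m + 1)) * r) (y : ℝ) :
    TOp r σ (fun t => (((α * hermiteFun m (r * t) : ℝ) : ℂ),
        ((α * β * hermiteFun (m + 1) (r * t) : ℝ) : ℂ))) y
      = (L : ℂ) • (((α * hermiteFun m (r * y) : ℝ) : ℂ),
        ((α * β * hermiteFun (m + 1) (r * y) : ℝ) : ℂ)) := by
  have hsq : √(2 * ((m : ℝ) + 1)) * √(2 * (m + 1)) = 2 * (m + 1) :=
    Real.mul_self_sqrt (by positivity)
  have hβr : β * (√(2 * (m + 1)) * r) = L - σ := by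
    apply mul_right_cancel₀ hLσ
    linear_combination (√(2 * (m + 1)) * r) * hβ + r ^ 2 * hsq - hL
  have hraise := sub_deriv_hermiteFun m (r * y)
  have hlower := add_deriv_hermiteFun_succ m (r * y)
  refine TOp_ofReal_eq_smul ((hasDerivAt_hermiteFun_comp_mul m r y).const_mul α)
    ((hasDerivAt_hermiteFun_comp_mul (m + 1) r y).const_mul (α * β)) ?_ ?_
  · linear_combination (α * β * r) * hlower + α * hermiteFun m (r * y) * hβr
  · linear_combination (α * r) * hraise - α * hermiteFun (m + 1) (r * y) * hβ

lemma lamE_sq {r σ : ℝ} {n : ℤ} (hn : n ≠ 0) :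
    lamE r σ n ^ 2 = σ ^ 2 + 2 * n.natAbs * r ^ 2 := by
  have hsign : ((n.sign : ℤ) : ℝ) ^ 2 = 1 := by
    rcases hn.lt_or_gt with h | h
    · simp [Int.sign_eq_neg_one_of_neg h]
    · simp [Int.sign_eq_one_of_pos h]
  rw [lamE, if_neg hn, mul_pow, hsign, one_mul, Real.sq_sqrt (by positivity), Nat.cast_natAbs,
    Int.cast_abs]

lemma lamE_add_ne_zero {r σ : ℝ} (hr : r ≠ 0) {n : ℤ} (hn : n ≠ 0) : lamE r σ n + σ ≠ 0 := by
  intro h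
  have hsq := lamE_sq (r := r) (σ := σ) hn
  have hnat : (1 : ℝ) ≤ n.natAbs := by exact_mod_cast Int.natAbs_pos.mpr hn
  have hr2 : 0 < r ^ 2 := by positivity
  rw [eq_neg_of_add_eq_zero_left h] at hsq
  nlinarith

lemma TOp_gE_zero (r σ y : ℝ) :
    TOp r σ (gE r σ 0) y = ((lamE r σ 0 : ℝ) : ℂ) • gE r σ 0 y := by
  have hg : gE r σ 0 = fun t =>
      (((0 : ℝ) : ℂ), (((√r)⁻¹ * hermiteFun 0 (r * t) : ℝ) : ℂ)) := by
    funext t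
    simp [gE]
  rw [hg, lamE, if_pos rfl]
  refine TOp_ofReal_eq_smul (hasDerivAt_const y 0)
    ((hasDerivAt_hermiteFun_comp_mul 0 r y).const_mul _) ?_ ?_
  · rw [deriv_hermiteFun_zero]
    ring
  · ring

lemma TOp_gE_of_ne_zero {r σ : ℝ} (hr : r ≠ 0) {n : ℤ} (hn : n ≠ 0) (y : ℝ) :
    TOp r σ (gE r σ n) y = ((lamE r σ n : ℝ) : ℂ) • gE r σ n y := by
  obtain ⟨m, hm⟩ : ∃ m, n.natAbs = m + 1 :=
    Nat.exists_eq_succ_of_ne_zero (Int.natAbs_ne_zero.mpr hn)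
  have habs : |(n : ℝ)| = m + 1 := by
    rw [← Int.cast_abs, ← Nat.cast_natAbs, hm, Nat.cast_succ]
  have hg : gE r σ n = fun t =>
      (((alphaE r σ n * hermiteFun m (r * t) : ℝ) : ℂ),
        ((alphaE r σ n * (√(2 * (m + 1)) * r / (lamE r σ n + σ)) * hermiteFun (m + 1) (r * t)
          : ℝ) : ℂ)) := by
    funext t
    rw [gE, if_neg hn, hm, habs, Nat.add_sub_cancel]
  have hL : lamE r σ n ^ 2 = σ ^ 2 + 2 * (m + 1) * r ^ 2 := by
    rw [lamE_sq hn, hm, Nat.cast_succ]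
  have hLσ := lamE_add_ne_zero (σ := σ) hr hn
  rw [hg]
  exact TOp_hermiteFun_pair _ m hL hLσ (div_mul_cancel₀ _ hLσ) y

/-- each `g_n` is an eigenfunction of `T_{r,σ}` with eigenvalue `λ_n`. -/
theorem stmt15 (r σ : ℝ) (hr : 0 < r) :
    ∀ (n : ℤ) (y : ℝ), TOp r σ (gE r σ n) y = ((lamE r σ n : ℝ) : ℂ) • gE r σ n y := by
  intro n y
  rcases eq_or_ne n 0 with rfl | hn
  · exact TOp_gE_zero r σ y
  · exact TOp_gE_of_ne_zero hr.ne' hn y
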